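/- arXiv:2509.22305 — 2 statements merged into one kernel-verified Lean document; each statement's English description precedes it below -/
import Mathlib

section
/- Let A be a compact self-adjoint operator on a separable Hilbert space H with orthonormal eigenbasis {vₛ} and eigenvalues {μₛ}. Suppose u ∈ H with ‖u‖ = 1 satisfies ‖A u − μ u‖ = α for some α > 0, and let d > α. Let T_d be the closed span of the eigenvectors whose eigenvalues lie in [μ − d, μ + d]. Then there exists u₀ ∈ T_d with ‖u − u₀‖ < 2α/d. -/
/-!
Take for `u₀` the orthogonal projection of `u` onto `T_d`. In the eigenbasis, `u - u₀` keeps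
exactly the coefficients `cₛ` of `u` with `|μₛ - μ| > d`, while `A u - μ u` has coefficients
`(μₛ - μ) cₛ`. Comparing coefficientwise and using Parseval gives `d ‖u - u₀‖ ≤ α`, so
`‖u - u₀‖ ≤ α / d < 2α / d`.
-/

open Submodule

section

variable {ι 𝕜 E : Type*} [RCLike 𝕜] [NormedAddCommGroup E] [InnerProductSpace 𝕜 E]

theorem Orthonormal.mem_orthogonal_topologicalClosure_span_image {v : ι → E}
    (hv : Orthonormal 𝕜 v) {S : Set ι} {i : ι} (hi : i ∉ S) :
    v i ∈ (span 𝕜 (v '' S)).topologicalClosureᗮ := by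
  rw [orthogonal_closure]
  refine (isOrtho_span.mpr ?_).le (mem_span_singleton_self (v i))
  rintro _ rfl _ ⟨j, hj, rfl⟩
  exact hv.inner_eq_zero (ne_of_mem_of_not_mem hj hi).symm

namespace HilbertBasis

theorem norm_le_norm_of_forall_norm_repr_le (b : HilbertBasis ι 𝕜 E) {x y : E}
    (h : ∀ i, ‖b.repr x i‖ ≤ ‖b.repr y i‖) : ‖x‖ ≤ ‖y‖ := by
  rw [← b.repr.norm_map x, ← b.repr.norm_map y]
  exact lp.norm_mono two_ne_zero h

theorem repr_apply_of_isSymmetric (b : HilbertBasis ι 𝕜 E) {T : E →ₗ[𝕜] E}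
    (hT : T.IsSymmetric) {ν : ι → ℝ} (hν : ∀ i, T (b i) = (ν i : 𝕜) • b i)
    (x : E) (i : ι) : b.repr (T x) i = ν i * b.repr x i := by
  rw [b.repr_apply_apply, b.repr_apply_apply, ← hT, hν, inner_smul_left,
    RCLike.conj_ofReal]

variable [CompleteSpace E]

theorem mul_norm_sub_starProjection_le (b : HilbertBasis ι 𝕜 E) {T : E →ₗ[𝕜] E}
    (hT : T.IsSymmetric) {ν : ι → ℝ} (hν : ∀ i, T (b i) = (ν i : 𝕜) • b i)
    {μ d : ℝ} (hd : 0 ≤ d) {S : Set ι} (hS : ∀ i ∉ S, d ≤ |ν i - μ|) (x : E) :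
    d * ‖x - (span 𝕜 (b '' S)).topologicalClosure.starProjection x‖
      ≤ ‖T x - (μ : 𝕜) • x‖ := by
  set K := (span 𝕜 (b '' S)).topologicalClosure
  have hnorm :
      ‖(d : 𝕜) • (x - K.starProjection x)‖ = d * ‖x - K.starProjection x‖ := by
    rw [norm_smul, RCLike.norm_ofReal, abs_of_nonneg hd]
  rw [← hnorm]
  refine b.norm_le_norm_of_forall_norm_repr_le fun i => ?_
  have hTx :
      b.repr (T x - (μ : 𝕜) • x) i = ((ν i - μ : ℝ) : 𝕜) * b.repr x i := by
    rw [map_sub, map_smul, lp.coeFn_sub, lp.coeFn_smul, Pi.sub_apply, Pi.smul_apply,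
      b.repr_apply_of_isSymmetric hT hν, smul_eq_mul, RCLike.ofReal_sub, sub_mul]
  rw [map_smul, lp.coeFn_smul, Pi.smul_apply, smul_eq_mul, hTx, norm_mul, norm_mul,
    RCLike.norm_ofReal, RCLike.norm_ofReal, abs_of_nonneg hd]
  by_cases hi : i ∈ S
  · have hbK : b i ∈ K := le_topologicalClosure _ (subset_span ⟨i, hi, rfl⟩)
    rw [b.repr_apply_apply,
      inner_right_of_mem_orthogonal hbK (K.sub_starProjection_mem_orthogonal x), norm_zero,
      mul_zero]
    positivity
  · have hbK : b i ∈ Kᗮ := b.orthonormal.mem_orthogonal_topologicalClosure_span_image hi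
    rw [map_sub, lp.coeFn_sub, Pi.sub_apply, b.repr_apply_apply (K.starProjection x),
      inner_left_of_mem_orthogonal (K.starProjection_apply_mem x) hbK, sub_zero]
    exact mul_le_mul_of_nonneg_right (hS i hi) (norm_nonneg _)

end HilbertBasis
end

theorem stmt_1_general
    {H : Type*} [NormedAddCommGroup H] [InnerProductSpace ℝ H] [CompleteSpace H]
    (A : H →L[ℝ] H) (hA : IsSelfAdjoint A)
    (v : ℕ → H) (μs : ℕ → ℝ)
    (hon : Orthonormal ℝ v)
    (hbasis : (Submodule.span ℝ (Set.range v)).topologicalClosure = ⊤)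
    (heig : ∀ s, A (v s) = μs s • v s)
    (μ α d : ℝ) (u : H)
    (hα : ‖A u - μ • u‖ = α) (hα0 : 0 < α) (hd : α < d) :
    ∃ u₀ ∈ (Submodule.span ℝ
        {x : H | ∃ s, μs s ∈ Set.Icc (μ - d) (μ + d) ∧ x = v s}).topologicalClosure,
      ‖u - u₀‖ < 2 * α / d := by
  have hd0 : 0 < d := hα0.trans hd
  let b : HilbertBasis ℕ ℝ H := HilbertBasis.mk hon hbasis.ge
  set S := {s | μs s ∈ Set.Icc (μ - d) (μ + d)}
  have hspan : {x : H | ∃ s, μs s ∈ Set.Icc (μ - d) (μ + d) ∧ x = v s} = b '' S := by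
    ext x
    simp [b, S, eq_comm]
  have hS : ∀ s ∉ S, d ≤ |μs s - μ| := by
    intro s hs
    by_contra! h
    obtain ⟨h₁, h₂⟩ := abs_sub_lt_iff.mp h
    exact hs ⟨by linarith, by linarith⟩
  have key := b.mul_norm_sub_starProjection_le hA.isSymmetric (by simpa [b] using heig)
    hd0.le hS u
  rw [hspan]
  refine ⟨_, starProjection_apply_mem _ u, ?_⟩
  rw [lt_div_iff₀ hd0]
  simp only [RCLike.ofReal_real_eq_id, id, ContinuousLinearMap.coe_coe, hα] at key
  linarith

/-- Lemma 13 of Vishik–Lyusternik type: let `A` be a compact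
self-adjoint operator on a separable Hilbert space with orthonormal eigenbasis `v s`
and eigenvalues `μs s`. If `u` is a unit vector with `‖A u - μ • u‖ = α > 0` and
`d > α`, then there is `u₀` in the closed span `T_d` of the eigenvectors whose
eigenvalues lie in `[μ - d, μ + d]` with `‖u - u₀‖ < 2α/d`. -/
theorem stmt_1
    {H : Type*} [NormedAddCommGroup H] [InnerProductSpace ℝ H] [CompleteSpace H]
    [TopologicalSpace.SeparableSpace H]
    (A : H →L[ℝ] H) (hA : IsSelfAdjoint A) (hAc : IsCompactOperator A)
    (v : ℕ → H) (μs : ℕ → ℝ)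
    (hon : Orthonormal ℝ v)
    (hbasis : (Submodule.span ℝ (Set.range v)).topologicalClosure = ⊤)
    (heig : ∀ s, A (v s) = μs s • v s)
    (μ α d : ℝ) (u : H) (hu : ‖u‖ = 1)
    (hα : ‖A u - μ • u‖ = α) (hα0 : 0 < α) (hd : α < d) :
    ∃ u₀ ∈ (Submodule.span ℝ
        {x : H | ∃ s, μs s ∈ Set.Icc (μ - d) (μ + d) ∧ x = v s}).topologicalClosure,
      ‖u - u₀‖ < 2 * α / d :=
  stmt_1_general A hA v μs hon hbasis heig μ α d u hα hα0 hd
end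

section
/- Let {u_ε^j} be orthonormal eigenvectors of compact self-adjoint operators A_ε with eigenvalues μ_ε^j, and suppose along a sequence ε_k → 0: μ_{ε_k}^j → μ̄^j and ‖A_{ε_k} u_{ε_k}^j − R_{ε_k} w^j‖_{ε_k} → 0 for some w^j ∈ H₀, where R_ε satisfies ‖R_ε f‖_ε → ‖f‖₀ (H1). Then the inner products satisfy (w^j, w^i)₀ = μ̄^j μ̄^i δ^{ij}; in particular if μ̄^j > 0 then ū^j := (μ̄^j)^{−1} w^j form an orthonormal system in H₀. -/
open Filter Topology
open scoped RealInnerProductSpace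

theorem key
    (H : ℕ → Type*) [∀ k, NormedAddCommGroup (H k)] [∀ k, InnerProductSpace ℝ (H k)]
    {H₀ : Type*} [NormedAddCommGroup H₀] [InnerProductSpace ℝ H₀]
    (A : ∀ k, H k →L[ℝ] H k)
    (R : ∀ k, H₀ →L[ℝ] H k)
    (hH1 : ∀ f : H₀, Tendsto (fun k => ‖(R k) f‖) atTop (𝓝 ‖f‖))
    (u : ∀ k, ℕ → H k) (μ : ℕ → ℕ → ℝ)
    (hon : ∀ k, Orthonormal ℝ (u k))
    (heig : ∀ k j, (A k) (u k j) = μ k j • u k j)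
    (μb : ℕ → ℝ) (w : ℕ → H₀)
    (hμ : ∀ j, Tendsto (fun k => μ k j) atTop (𝓝 (μb j)))
    (hw : ∀ j, Tendsto (fun k => ‖(A k) (u k j) - (R k) (w j)‖) atTop (𝓝 0))
    (j i : ℕ) (c : ℝ) (hc : c = 1 ∨ c = -1) :
    ‖w j + c • w i‖ ^ 2 =
      μb j ^ 2 + (c * μb i) ^ 2 + 2 * (μb j * (c * μb i)) *
        (if j = i then 1 else 0) := by
  set δ : ℝ := if j = i then (1:ℝ) else 0 with hδ
  have habs : |c| = 1 := by rcases hc with h | h <;> simp [h]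
  -- F k = ‖A u_j + c • A u_i‖
  set F : ℕ → ℝ := fun k => ‖(A k) (u k j) + c • (A k) (u k i)‖ with hF
  set G : ℕ → ℝ := fun k => ‖(R k) (w j) + c • (R k) (w i)‖ with hG
  have hinner : ∀ k, ⟪u k j, u k i⟫ = δ := by
    intro k
    have := (orthonormal_iff_ite.mp (hon k)) j i
    simpa [hδ] using this
  have hnormu : ∀ k (m : ℕ), ‖u k m‖ = 1 := fun k m => (hon k).1 m
  -- F squared formula
  have hFsq : ∀ k, F k ^ 2 = μ k j ^ 2 + (c * μ k i) ^ 2 + 2 * (μ k j * (c * μ k i)) * δ := by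
    intro k
    have : F k ^ 2 = ‖(μ k j) • u k j + (c * μ k i) • u k i‖ ^ 2 := by
      rw [hF]; simp only [heig, smul_smul]
    rw [this, norm_add_sq_real, real_inner_smul_left, real_inner_smul_right, hinner,
      norm_smul, norm_smul, hnormu, hnormu]
    simp [abs_mul_abs_self, mul_pow, sq_abs]
    ring
  -- G tends to ‖w j + c • w i‖
  have hGlim : Tendsto G atTop (𝓝 ‖w j + c • w i‖) := by
    have := hH1 (w j + c • w i)
    have he : ∀ k, G k = ‖(R k) (w j + c • w i)‖ := by
      intro k; rw [hG]; simp [map_add, map_smul]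
    simpa [he] using this
  -- F - G → 0
  have hdiff : Tendsto (fun k => F k - G k) atTop (𝓝 0) := by
    refine squeeze_zero_norm (a := fun k => ‖(A k) (u k j) - (R k) (w j)‖ + ‖(A k) (u k i) - (R k) (w i)‖) ?_ ?_
    · intro k
      have h2 : ((A k) (u k j) + c • (A k) (u k i)) - ((R k) (w j) + c • (R k) (w i))
          = ((A k) (u k j) - (R k) (w j)) + c • ((A k) (u k i) - (R k) (w i)) := by
        rw [smul_sub]; abel
      rw [Real.norm_eq_abs]
      calc |F k - G k| ≤ ‖((A k) (u k j) + c • (A k) (u k i)) -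
            ((R k) (w j) + c • (R k) (w i))‖ := abs_norm_sub_norm_le _ _
        _ = ‖((A k) (u k j) - (R k) (w j)) + c • ((A k) (u k i) - (R k) (w i))‖ := by
            rw [h2]
        _ ≤ ‖(A k) (u k j) - (R k) (w j)‖ + ‖c • ((A k) (u k i) - (R k) (w i))‖ :=
            norm_add_le _ _
        _ = _ := by rw [norm_smul, Real.norm_eq_abs, habs, one_mul]
    · simpa using (hw j).add (hw i)
  have hFlim : Tendsto F atTop (𝓝 ‖w j + c • w i‖) := by
    have := hGlim.add hdiff
    simpa using this
  have hFsqlim : Tendsto (fun k => F k ^ 2) atTop (𝓝 (‖w j + c • w i‖ ^ 2)) :=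
    hFlim.pow 2
  have hFsqlim' : Tendsto (fun k => F k ^ 2) atTop
      (𝓝 (μb j ^ 2 + (c * μb i) ^ 2 + 2 * (μb j * (c * μb i)) * δ)) := by
    simp only [hFsq]
    exact (((hμ j).pow 2).add (((hμ i).const_mul c).pow 2)).add
      ((((hμ j).mul ((hμ i).const_mul c)).const_mul 2).mul_const δ)
  exact tendsto_nhds_unique hFsqlim hFsqlim'

/-- orthogonality of limit eigenvectors via polarization. Let
`u k j` be orthonormal eigenvectors of compact self-adjoint operators `A k` with
eigenvalues `μ k j` (the sequence `k` playing the role of `ε_k → 0`), let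
`R k : H₀ → H k` satisfy H1 (`‖R k f‖ → ‖f‖` for every `f`), and suppose
`μ k j → μ̄ j` and `‖A k (u k j) − R k (w j)‖ → 0`. Then
`(w j, w i)₀ = μ̄ j μ̄ i δ^{ij}`; in particular, if every `μ̄ j > 0`, the vectors
`ū j = (μ̄ j)⁻¹ w j` form an orthonormal system in `H₀`. -/
theorem stmt_17
    (H : ℕ → Type*) [∀ k, NormedAddCommGroup (H k)] [∀ k, InnerProductSpace ℝ (H k)]
    [∀ k, CompleteSpace (H k)] [∀ k, TopologicalSpace.SeparableSpace (H k)]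
    {H₀ : Type*} [NormedAddCommGroup H₀] [InnerProductSpace ℝ H₀] [CompleteSpace H₀]
    [TopologicalSpace.SeparableSpace H₀]
    (A : ∀ k, H k →L[ℝ] H k)
    (hsa : ∀ k, IsSelfAdjoint (A k)) (hc : ∀ k, IsCompactOperator (A k))
    (R : ∀ k, H₀ →L[ℝ] H k)
    (hH1 : ∀ f : H₀, Tendsto (fun k => ‖(R k) f‖) atTop (𝓝 ‖f‖))
    (u : ∀ k, ℕ → H k) (μ : ℕ → ℕ → ℝ)
    (hon : ∀ k, Orthonormal ℝ (u k))
    (heig : ∀ k j, (A k) (u k j) = μ k j • u k j)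
    (μb : ℕ → ℝ) (w : ℕ → H₀)
    (hμ : ∀ j, Tendsto (fun k => μ k j) atTop (𝓝 (μb j)))
    (hw : ∀ j, Tendsto (fun k => ‖(A k) (u k j) - (R k) (w j)‖) atTop (𝓝 0)) :
    (∀ j i, ⟪w j, w i⟫ = μb j * μb i * (if j = i then 1 else 0)) ∧
    ((∀ j, 0 < μb j) → Orthonormal ℝ (fun j => (μb j)⁻¹ • w j)) := by
  have hkey : ∀ j i, ⟪w j, w i⟫ = μb j * μb i * (if j = i then 1 else 0) := by
    intro j i
    have hp := key H A R hH1 u μ hon heig μb w hμ hw j i 1 (Or.inl rfl)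
    have hm := key H A R hH1 u μ hon heig μb w hμ hw j i (-1) (Or.inr rfl)
    have h4 : (4:ℝ) * ⟪w j, w i⟫ = ‖w j + w i‖^2 - ‖w j - w i‖^2 := by
      rw [norm_add_sq_real, norm_sub_sq_real]; ring
    rw [show w j + w i = w j + (1:ℝ) • w i by simp] at h4
    rw [show w j - w i = w j + (-1:ℝ) • w i by simp [sub_eq_add_neg]] at h4
    rw [hp, hm] at h4
    by_cases h : j = i <;> simp only [h, if_true, if_pos, if_neg, if_false] at h4 ⊢ <;> linarith
  refine ⟨hkey, fun hpos => ?_⟩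
  rw [orthonormal_iff_ite]
  intro j i
  have := hkey j i
  rw [real_inner_smul_left, real_inner_smul_right, this]
  by_cases h : j = i
  · subst h
    have hne : μb j ≠ 0 := (hpos j).ne'
    rw [if_pos rfl]
    field_simp
  · simp [h]
end
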